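/- Let X be an operator with trace norm ‖X‖₁ ≤ 1 and sum of squared singular values tr(XX*) ≥ 1 − 4ε for some 0 ≤ ε < 1/4. Then the largest singular value of X is at least 1 − 4ε, and X can be written as X = (1 − 4ε)|φ⟩⟨χ| + 4εY for unit vectors φ, χ and an operator Y with ‖Y‖₁ ≤ 1. -/

import Mathlib

open Matrix BigOperators
open scoped ComplexOrder

/-- The largest eigenvalue of a Hermitian matrix (0 if not Hermitian). -/
noncomputable def specMax {n : Type*} [Fintype n] [DecidableEq n]
    (M : Matrix n n ℂ) : ℝ :=
  if h : M.IsHermitian then ⨆ i, h.eigenvalues i else 0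

/-- The trace norm: the sum of the singular values. -/
noncomputable def traceNorm {m n : Type*} [Fintype m] [Fintype n] [DecidableEq n]
    (X : Matrix m n ℂ) : ℝ :=
  ∑ i, Real.sqrt ((Matrix.posSemidef_conjTranspose_mul_self X).1.eigenvalues i)

/-!
Write `σⱼ = √λⱼ` for the singular values of `X`, where `λⱼ` are the eigenvalues of `Xᴴ * X`.
Since `∑ σⱼ² ≤ (max σ) ∑ σⱼ ≤ max σ`, some `σᵢ` is at least `a = 1 - 4ε`. Let `χ` be the
eigenvector of `Xᴴ * X` for `λᵢ` and `φ = σᵢ⁻¹ • X χ`. Then `Z = X - a φ χᴴ` is `X` times the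
unitary conjugate of `diag (1 - (a / σᵢ) eᵢ)`, so the singular values of `Z` are those of `X` with
`σᵢ` lowered to `σᵢ - a`; hence `‖Z‖₁ = ‖X‖₁ - a ≤ 4ε`, so `Z = 4ε • Y` with `‖Y‖₁ ≤ 1`. The
trace norm can be read off any unitary diagonalization of `Zᴴ * Z`, because its eigenvalues are
the roots of the characteristic polynomial.
-/

theorem exists_le_of_sum_le_one_of_le_sum_sq {ι : Type*} [Fintype ι] {s : ι → ℝ} {a : ℝ}
    (hs : ∀ i, 0 ≤ s i) (hsum : ∑ i, s i ≤ 1) (ha : 0 < a) (hsq : a ≤ ∑ i, s i ^ 2) :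
    ∃ i, a ≤ s i := by
  have hne : (Finset.univ : Finset ι).Nonempty := by
    obtain ⟨j, -, -⟩ := Finset.exists_ne_zero_of_sum_ne_zero (ha.trans_le hsq).ne'
    exact ⟨j, Finset.mem_univ j⟩
  obtain ⟨i, -, hmax⟩ := Finset.univ.exists_max_image s hne
  refine ⟨i, ?_⟩
  calc a ≤ ∑ j, s j ^ 2 := hsq
    _ ≤ ∑ j, s i * s j := Finset.sum_le_sum fun j _ => by
        rw [sq]; exact mul_le_mul_of_nonneg_right (hmax j (Finset.mem_univ j)) (hs j)
    _ = s i * ∑ j, s j := Finset.mul_sum _ _ _ |>.symm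
    _ ≤ s i := mul_le_of_le_one_right (hs i) hsum

theorem sum_abs_one_sub_single_mul {ι : Type*} [Fintype ι] [DecidableEq ι] (i : ι) {c : ℝ}
    (hc : c ≤ 1) (σ : ι → ℝ) :
    ∑ j, |(1 - Pi.single i c : ι → ℝ) j| * σ j = ∑ j, σ j - c * σ i := by
  have hsingle_le : ∀ j, (Pi.single i c : ι → ℝ) j ≤ 1 := fun j => by
    by_cases hj : j = i
    · simpa [hj] using hc
    · simp [hj]
  simp only [Pi.sub_apply, Pi.one_apply, abs_of_nonneg (sub_nonneg.mpr (hsingle_le _)), sub_mul,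
    one_mul, Finset.sum_sub_distrib]
  rw [Fintype.sum_eq_single (f := fun j => (Pi.single i c : ι → ℝ) j * σ j) i
    fun j hj => by simp [hj], Pi.single_eq_same]

namespace Matrix

variable {𝕜 : Type*} [RCLike 𝕜] {n : Type*} [Fintype n]

theorem dotProduct_star_self_eq_sum_norm_sq (v : n → 𝕜) :
    star v ⬝ᵥ v = ((∑ i, ‖v i‖ ^ 2 : ℝ) : 𝕜) := by
  push_cast
  exact Finset.sum_congr rfl fun i _ => RCLike.conj_mul (v i)

variable [DecidableEq n]

theorem IsHermitian.map_eigenvalues_eq_of_eq_conj {A : Matrix n n 𝕜} (hA : A.IsHermitian)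
    {U : unitaryGroup n 𝕜} {μ : n → ℝ}
    (h : A = Unitary.conjStarAlgAut 𝕜 _ U (diagonal (RCLike.ofReal ∘ μ))) :
    Finset.univ.val.map hA.eigenvalues = Finset.univ.val.map μ := by
  have hchar : A.charpoly = (diagonal (RCLike.ofReal ∘ μ : n → 𝕜)).charpoly := by
    rw [h, Unitary.conjStarAlgAut_apply, charpoly_mul_comm, ← mul_assoc]
    simp
  have hroots : (Finset.univ.val.map (RCLike.ofReal ∘ μ : n → 𝕜)) =
      Finset.univ.val.map (RCLike.ofReal ∘ hA.eigenvalues) := by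
    rw [← hA.roots_charpoly_eq_eigenvalues, hchar, charpoly_diagonal,
      ← Polynomial.roots_multiset_prod_X_sub_C (Finset.univ.val.map _), Multiset.map_map]
    rfl
  rw [← Multiset.map_map, ← Multiset.map_map] at hroots
  exact (Multiset.map_injective RCLike.ofReal_injective hroots).symm

theorem conjStarAlgAut_diagonal_single (U : unitaryGroup n 𝕜) (i : n) (r : 𝕜) :
    Unitary.conjStarAlgAut 𝕜 _ U (diagonal (Pi.single i r)) =
      r • vecMulVec ((U : Matrix n n 𝕜).col i) (star ((U : Matrix n n 𝕜).col i)) := by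
  have hrow : Pi.single i 1 ᵥ* star (U : Matrix n n 𝕜) = star ((U : Matrix n n 𝕜).col i) := by
    ext j
    simp [star_apply]
  have hsingle : single i i r = r • single i i (1 : 𝕜) := by rw [smul_single, smul_eq_mul, mul_one]
  rw [diagonal_single, hsingle, single_eq_single_vecMulVec_single, map_smul,
    Unitary.conjStarAlgAut_apply, mul_vecMulVec, vecMulVec_mul, mulVec_single_one, hrow]

theorem IsHermitian.eigenvalues_le_specMax {A : Matrix n n ℂ} (hA : A.IsHermitian) (i : n) :
    hA.eigenvalues i ≤ specMax A := by
  rw [specMax, dif_pos hA]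
  exact le_ciSup (Set.finite_range _).bddAbove i

end Matrix

section TraceNorm

variable {m n : Type*} [Fintype m] [Fintype n] [DecidableEq n]

theorem traceNorm_nonneg (W : Matrix m n ℂ) : 0 ≤ traceNorm W :=
  Finset.sum_nonneg fun _ _ => Real.sqrt_nonneg _

theorem traceNorm_eq_sum_sqrt_of_eq_conj {W : Matrix m n ℂ} {U : unitaryGroup n ℂ} {μ : n → ℝ}
    (h : Wᴴ * W = Unitary.conjStarAlgAut ℂ _ U (diagonal (RCLike.ofReal ∘ μ))) :
    traceNorm W = ∑ i, √(μ i) := by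
  have hspec := (posSemidef_conjTranspose_mul_self W).1.map_eigenvalues_eq_of_eq_conj h
  calc traceNorm W = (((Finset.univ.val.map
        (posSemidef_conjTranspose_mul_self W).1.eigenvalues)).map Real.sqrt).sum := by
        rw [Multiset.map_map, Finset.sum_map_val]; rfl
    _ = ∑ i, √(μ i) := by rw [hspec, Multiset.map_map, Finset.sum_map_val]; rfl

theorem traceNorm_mul_conj_diagonal {X : Matrix m n ℂ} {U : unitaryGroup n ℂ} {μ : n → ℝ}
    (h : Xᴴ * X = Unitary.conjStarAlgAut ℂ _ U (diagonal (RCLike.ofReal ∘ μ))) (d : n → ℝ) :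
    traceNorm (X * Unitary.conjStarAlgAut ℂ _ U (diagonal (RCLike.ofReal ∘ d))) =
      ∑ i, |d i| * √(μ i) := by
  set D : Matrix n n ℂ := diagonal (RCLike.ofReal ∘ d)
  have hgram : (X * Unitary.conjStarAlgAut ℂ _ U D)ᴴ * (X * Unitary.conjStarAlgAut ℂ _ U D) =
      Unitary.conjStarAlgAut ℂ _ U (diagonal (RCLike.ofReal ∘ fun i => d i ^ 2 * μ i)) := by
    calc _ = star (Unitary.conjStarAlgAut ℂ _ U D) * (Xᴴ * X) * Unitary.conjStarAlgAut ℂ _ U D := by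
          simp only [conjTranspose_mul, star_eq_conjTranspose, Matrix.mul_assoc]
      _ = Unitary.conjStarAlgAut ℂ _ U (star D * diagonal (RCLike.ofReal ∘ μ) * D) := by
          rw [h, map_mul, map_mul, map_star]
      _ = _ := by
          rw [star_eq_conjTranspose, diagonal_conjTranspose, diagonal_mul_diagonal,
            diagonal_mul_diagonal]
          congr 2
          ext i
          simp only [Pi.star_apply, Function.comp_apply, RCLike.star_def, RCLike.conj_ofReal]
          push_cast
          ring
  rw [traceNorm_eq_sum_sqrt_of_eq_conj hgram]
  congr 1
  ext i
  rw [Real.sqrt_mul (sq_nonneg _), Real.sqrt_sq_eq_abs]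

theorem traceNorm_smul (c : ℂ) (W : Matrix m n ℂ) : traceNorm (c • W) = ‖c‖ * traceNorm W := by
  set hW := (posSemidef_conjTranspose_mul_self W).1
  have hgram : (c • W)ᴴ * (c • W) = Unitary.conjStarAlgAut ℂ _ hW.eigenvectorUnitary
      (diagonal (RCLike.ofReal ∘ fun i => ‖c‖ ^ 2 * hW.eigenvalues i)) := by
    have hdiag : diagonal (RCLike.ofReal ∘ fun i => ‖c‖ ^ 2 * hW.eigenvalues i : n → ℂ) =
        (star c * c) • diagonal (RCLike.ofReal ∘ hW.eigenvalues) := by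
      rw [RCLike.star_def (K := ℂ), RCLike.conj_mul c, ← diagonal_smul]
      congr 1
      ext i
      simp
    rw [hdiag, map_smul, ← hW.spectral_theorem, conjTranspose_smul, smul_mul, Matrix.mul_smul,
      smul_smul]
  rw [traceNorm_eq_sum_sqrt_of_eq_conj hgram, traceNorm, Finset.mul_sum]
  congr 1
  ext i
  rw [Real.sqrt_mul (sq_nonneg _), Real.sqrt_sq (norm_nonneg _)]

theorem eq_zero_of_traceNorm_eq_zero {W : Matrix m n ℂ} (h : traceNorm W = 0) : W = 0 := by
  set hW := posSemidef_conjTranspose_mul_self W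
  have hsqrt := (Finset.sum_eq_zero_iff_of_nonneg fun i _ => Real.sqrt_nonneg _).mp h
  have heig : hW.1.eigenvalues = 0 := funext fun i =>
    (Real.sqrt_eq_zero (hW.eigenvalues_nonneg i)).mp (hsqrt i (Finset.mem_univ i))
  exact conjTranspose_mul_self_eq_zero.mp (hW.1.eigenvalues_eq_zero_iff.mp heig)

theorem exists_smul_eq_of_traceNorm_le {Z : Matrix m n ℂ} {t : ℝ} (h : traceNorm Z ≤ t) :
    ∃ Y : Matrix m n ℂ, traceNorm Y ≤ 1 ∧ Z = (t : ℂ) • Y := by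
  rcases ((traceNorm_nonneg Z).trans h).eq_or_lt with rfl | ht
  · have hZ := eq_zero_of_traceNorm_eq_zero (h.antisymm (traceNorm_nonneg Z))
    exact ⟨Z, by linarith, by simp [hZ]⟩
  · refine ⟨(t : ℂ)⁻¹ • Z, ?_, ?_⟩
    · rw [traceNorm_smul, norm_inv, Complex.norm_real, Real.norm_of_nonneg ht.le,
        inv_mul_le_iff₀ ht, mul_one]
      exact h
    · rw [smul_smul, mul_inv_cancel₀ (by exact_mod_cast ht.ne'), one_smul]

theorem sum_norm_sq_mulVec_eigenvectorBasis (X : Matrix m n ℂ) (i : n) :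
    ∑ j, ‖(X *ᵥ ⇑((posSemidef_conjTranspose_mul_self X).1.eigenvectorBasis i)) j‖ ^ 2 =
      (posSemidef_conjTranspose_mul_self X).1.eigenvalues i := by
  set hX := (posSemidef_conjTranspose_mul_self X).1
  set χ : n → ℂ := ⇑(hX.eigenvectorBasis i)
  have hχ : star χ ⬝ᵥ χ = 1 := by
    rw [dotProduct_star_self_eq_sum_norm_sq, ← EuclideanSpace.norm_sq_eq,
      hX.eigenvectorBasis.orthonormal.1 i, one_pow, RCLike.ofReal_one]
  have h : star (X *ᵥ χ) ⬝ᵥ (X *ᵥ χ) = (hX.eigenvalues i : ℂ) := by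
    rw [star_mulVec, ← dotProduct_mulVec, mulVec_mulVec, hX.mulVec_eigenvectorBasis,
      dotProduct_smul, hχ, Complex.real_smul, mul_one]
  rw [dotProduct_star_self_eq_sum_norm_sq] at h
  exact Complex.ofReal_injective h

theorem exists_traceNorm_sub_smul_vecMulVec_eq (X : Matrix m n ℂ) (i : n) {a : ℝ} (ha : 0 < a)
    (hai : a ≤ √((posSemidef_conjTranspose_mul_self X).1.eigenvalues i)) :
    ∃ (φ : m → ℂ) (χ : n → ℂ), ∑ j, ‖φ j‖ ^ 2 = 1 ∧ ∑ j, ‖χ j‖ ^ 2 = 1 ∧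
      traceNorm (X - (a : ℂ) • vecMulVec φ (star χ)) = traceNorm X - a := by
  set hX := (posSemidef_conjTranspose_mul_self X).1
  set s := √(hX.eigenvalues i)
  have hs : 0 < s := ha.trans_le hai
  set χ : n → ℂ := ⇑(hX.eigenvectorBasis i)
  set φ : m → ℂ := (s : ℂ)⁻¹ • X *ᵥ χ
  have hχ : ∑ j, ‖χ j‖ ^ 2 = 1 := by
    rw [← EuclideanSpace.norm_sq_eq, hX.eigenvectorBasis.orthonormal.1 i, one_pow]
  have hXχ : ∑ j, ‖(X *ᵥ χ) j‖ ^ 2 = s ^ 2 := by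
    rw [sum_norm_sq_mulVec_eigenvectorBasis,
      Real.sq_sqrt ((posSemidef_conjTranspose_mul_self X).eigenvalues_nonneg i)]
  have hφ : ∑ j, ‖φ j‖ ^ 2 = 1 := by
    simp only [φ, Pi.smul_apply, norm_smul, mul_pow, ← Finset.mul_sum, hXχ, norm_inv,
      Complex.norm_real, Real.norm_of_nonneg hs.le]
    field_simp
  have hZ : X - (a : ℂ) • vecMulVec φ (star χ) = X * Unitary.conjStarAlgAut ℂ _
      hX.eigenvectorUnitary (diagonal (RCLike.ofReal ∘ (1 - Pi.single i (a / s)))) := by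
    have hd : (RCLike.ofReal ∘ (1 - Pi.single i (a / s)) : n → ℂ) =
        fun j => 1 - Pi.single i ((a / s : ℝ) : ℂ) j := by
      ext j
      by_cases hj : j = i <;> simp [hj]
    rw [hd, ← diagonal_sub, diagonal_one, map_sub, map_one, conjStarAlgAut_diagonal_single,
      hX.eigenvectorUnitary_col_eq, Matrix.mul_sub, Matrix.mul_one, Matrix.mul_smul, mul_vecMulVec,
      smul_vecMulVec, smul_smul]
    congr 2
    push_cast
    field_simp
  refine ⟨φ, χ, hφ, hχ, ?_⟩
  rw [hZ, traceNorm_mul_conj_diagonal hX.spectral_theorem,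
    sum_abs_one_sub_single_mul i ((div_le_one hs).mpr hai), div_mul_cancel₀ _ hs.ne']
  rfl

end TraceNorm

theorem near_rank_one_decomposition_general {m n : ℕ}
    (X : Matrix (Fin m) (Fin n) ℂ) (ε : ℝ) (hε : ε < 1 / 4)
    (htn : traceNorm X ≤ 1)
    (hsq : ((X * Xᴴ).trace).re ≥ 1 - 4 * ε) :
    Real.sqrt (specMax (Xᴴ * X)) ≥ 1 - 4 * ε ∧
      ∃ (φ : Fin m → ℂ) (χ : Fin n → ℂ) (Y : Matrix (Fin m) (Fin n) ℂ),
        (∑ i, ‖φ i‖ ^ 2 = 1) ∧ (∑ i, ‖χ i‖ ^ 2 = 1) ∧ traceNorm Y ≤ 1 ∧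
        X = ((1 - 4 * ε : ℝ) : ℂ) • Matrix.vecMulVec φ (star χ) +
          ((4 * ε : ℝ) : ℂ) • Y := by
  set hX := posSemidef_conjTranspose_mul_self X
  have ha : 0 < 1 - 4 * ε := by linarith
  have hsum_sq : 1 - 4 * ε ≤ ∑ i, √(hX.1.eigenvalues i) ^ 2 := by
    simp_rw [Real.sq_sqrt (hX.eigenvalues_nonneg _)]
    rw [trace_mul_comm, hX.1.trace_eq_sum_eigenvalues, Complex.re_sum] at hsq
    simpa using hsq
  obtain ⟨i, hi⟩ := exists_le_of_sum_le_one_of_le_sum_sq (fun _ => Real.sqrt_nonneg _) htn ha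
    hsum_sq
  refine ⟨hi.trans (Real.sqrt_le_sqrt (hX.1.eigenvalues_le_specMax i)), ?_⟩
  obtain ⟨φ, χ, hφ, hχ, hZ⟩ := exists_traceNorm_sub_smul_vecMulVec_eq X i ha hi
  obtain ⟨Y, hY, hZY⟩ := exists_smul_eq_of_traceNorm_le (t := 4 * ε) (by rw [hZ]; linarith)
  exact ⟨φ, χ, Y, hφ, hχ, hY, by rw [← hZY, add_sub_cancel]⟩

/-- If ‖X‖₁ ≤ 1 and tr(XX*) ≥ 1 − 4ε with 0 ≤ ε < 1/4, then the largest singular value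
of X is at least 1 − 4ε and X = (1 − 4ε)|φ⟩⟨χ| + 4εY with φ, χ unit and ‖Y‖₁ ≤ 1. -/
theorem near_rank_one_decomposition {m n : ℕ} (hm : 0 < m) (hn : 0 < n)
    (X : Matrix (Fin m) (Fin n) ℂ) (ε : ℝ) (hε0 : 0 ≤ ε) (hε : ε < 1 / 4)
    (htn : traceNorm X ≤ 1)
    (hsq : ((X * Xᴴ).trace).re ≥ 1 - 4 * ε) :
    Real.sqrt (specMax (Xᴴ * X)) ≥ 1 - 4 * ε ∧
      ∃ (φ : Fin m → ℂ) (χ : Fin n → ℂ) (Y : Matrix (Fin m) (Fin n) ℂ),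
        (∑ i, ‖φ i‖ ^ 2 = 1) ∧ (∑ i, ‖χ i‖ ^ 2 = 1) ∧ traceNorm Y ≤ 1 ∧
        X = ((1 - 4 * ε : ℝ) : ℂ) • Matrix.vecMulVec φ (star χ) +
          ((4 * ε : ℝ) : ℂ) • Y :=
  near_rank_one_decomposition_general X ε hε htn hsq
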